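/- The rule Repl is admissible in G3i^=⁻: for every atomic formula P, terms s and r, variable v not occurring in s or r, and finite multisets Γ, Δ of formulas, if the sequent s = r, P[v/s], P[v/r], Γ ⇒ Δ is derivable in G3i^=⁻, then the sequent s = r, P[v/s], Γ ⇒ Δ is derivable in G3i^=⁻. -/

import Mathlib

open FirstOrder Language Multiset

universe u v

variable {L : FirstOrder.Language.{u, v}}

/-- Number of occurrences of the variable `v` in a term. -/
def tCount (v : ℕ) : L.Term ℕ → ℕ
  | .var w => if w = v then 1 else 0
  | .func _ ts => Finset.univ.sum fun i => tCount v (ts i)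

/-- First-order formulas over the language `L` (with built-in equality),
with natural numbers as variables. -/
inductive Fm (L : FirstOrder.Language.{u, v}) : Type (max u v) where
  | falsum : Fm L
  | equal : L.Term ℕ → L.Term ℕ → Fm L
  | rel {l : ℕ} : L.Relations l → (Fin l → L.Term ℕ) → Fm L
  | and : Fm L → Fm L → Fm L
  | or : Fm L → Fm L → Fm L
  | imp : Fm L → Fm L → Fm L
  | all : ℕ → Fm L → Fm L
  | ex : ℕ → Fm L → Fm L

namespace Fm

/-- Atomic formulas: equalities and relational atoms. -/
inductive IsAtomic : Fm L → Prop where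
  | equal (t₁ t₂ : L.Term ℕ) : (Fm.equal t₁ t₂).IsAtomic
  | rel {l : ℕ} (R : L.Relations l) (ts : Fin l → L.Term ℕ) : (Fm.rel R ts).IsAtomic

/-- Number of free occurrences of the variable `v` in a formula. -/
def fCount (v : ℕ) : Fm L → ℕ
  | falsum => 0
  | equal t₁ t₂ => tCount v t₁ + tCount v t₂
  | rel _ ts => Finset.univ.sum fun i => tCount v (ts i)
  | and A B => fCount v A + fCount v B
  | or A B => fCount v A + fCount v B
  | imp A B => fCount v A + fCount v B
  | all y A => if y = v then 0 else fCount v A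
  | ex y A => if y = v then 0 else fCount v A

/-- The set of free variables of a formula. -/
def freeVars : Fm L → Set ℕ
  | falsum => ∅
  | equal t₁ t₂ => {w | tCount w t₁ ≠ 0 ∨ tCount w t₂ ≠ 0}
  | rel _ ts => {w | ∃ i, tCount w (ts i) ≠ 0}
  | and A B => A.freeVars ∪ B.freeVars
  | or A B => A.freeVars ∪ B.freeVars
  | imp A B => A.freeVars ∪ B.freeVars
  | all y A => A.freeVars \ {y}
  | ex y A => A.freeVars \ {y}

/-- Simultaneous substitution of terms for the free variables of a formula. -/
def ssub (σ : ℕ → L.Term ℕ) : Fm L → Fm L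
  | falsum => falsum
  | equal t₁ t₂ => equal (t₁.subst σ) (t₂.subst σ)
  | rel R ts => rel R fun i => (ts i).subst σ
  | and A B => and (A.ssub σ) (B.ssub σ)
  | or A B => or (A.ssub σ) (B.ssub σ)
  | imp A B => imp (A.ssub σ) (B.ssub σ)
  | all y A => all y (A.ssub (Function.update σ y (Term.var y)))
  | ex y A => ex y (A.ssub (Function.update σ y (Term.var y)))

/-- `A.subst v t` is `A[v/t]`, the substitution of the term `t`
for the variable `v` in `A`. -/
def subst (v : ℕ) (t : L.Term ℕ) (A : Fm L) : Fm L :=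
  A.ssub (Function.update (Term.var : ℕ → L.Term ℕ) v t)

/-- `t` is free for `x` in `A` (no free occurrence of `x` lies in the scope of a
quantifier binding a variable of `t`). -/
def freeFor (t : L.Term ℕ) (x : ℕ) : Fm L → Prop
  | falsum => True
  | equal _ _ => True
  | rel _ _ => True
  | and A B => freeFor t x A ∧ freeFor t x B
  | or A B => freeFor t x A ∧ freeFor t x B
  | imp A B => freeFor t x A ∧ freeFor t x B
  | all y A => x = y ∨ x ∉ A.freeVars ∨ (tCount y t = 0 ∧ freeFor t x A)
  | ex y A => x = y ∨ x ∉ A.freeVars ∨ (tCount y t = 0 ∧ freeFor t x A)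

end Fm

/-- The rule Repl, given as the relation between the antecedent of the premiss and the
antecedent of the conclusion (the succedent is unchanged): from
`s = r, P[v/s], P[v/r], Γ ⇒ Δ` infer `s = r, P[v/s], Γ ⇒ Δ`, for `P` atomic and
`v` not occurring in `s, r`. -/
def ReplFull (L : FirstOrder.Language.{u, v}) : Multiset (Fm L) → Multiset (Fm L) → Prop := fun Γp Γc =>
  ∃ (s r : L.Term ℕ) (v : ℕ) (P : Fm L) (Γ : Multiset (Fm L)),
    P.IsAtomic ∧ tCount v s = 0 ∧ tCount v r = 0 ∧
    Γp = Fm.equal s r ::ₘ P.subst v s ::ₘ P.subst v r ::ₘ Γ ∧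
    Γc = Fm.equal s r ::ₘ P.subst v s ::ₘ Γ

/-- The rule Repl⁻: from `s = r, P[v/r], Γ ⇒ Δ` infer `s = r, P[v/s], Γ ⇒ Δ`,
for `P` atomic and `v` not occurring in `s, r`. -/
def ReplMinus (L : FirstOrder.Language.{u, v}) : Multiset (Fm L) → Multiset (Fm L) → Prop := fun Γp Γc =>
  ∃ (s r : L.Term ℕ) (v : ℕ) (P : Fm L) (Γ : Multiset (Fm L)),
    P.IsAtomic ∧ tCount v s = 0 ∧ tCount v r = 0 ∧
    Γp = Fm.equal s r ::ₘ P.subst v r ::ₘ Γ ∧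
    Γc = Fm.equal s r ::ₘ P.subst v s ::ₘ Γ

/-- The rule Repl₁⁻: Repl⁻ restricted to atomic `P` with exactly one occurrence of `v`. -/
def ReplMinus1 (L : FirstOrder.Language.{u, v}) : Multiset (Fm L) → Multiset (Fm L) → Prop := fun Γp Γc =>
  ∃ (s r : L.Term ℕ) (v : ℕ) (P : Fm L) (Γ : Multiset (Fm L)),
    P.IsAtomic ∧ tCount v s = 0 ∧ tCount v r = 0 ∧ Fm.fCount v P = 1 ∧
    Γp = Fm.equal s r ::ₘ P.subst v r ::ₘ Γ ∧
    Γc = Fm.equal s r ::ₘ P.subst v s ::ₘ Γ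

/-- `DerC rp n Γ Δ`: the sequent `Γ ⇒ Δ` has a derivation of height at most `n` in the
classical multisuccedent G3 calculus `G3c` with the equality rule Ref and the
replacement rule given by `rp` (e.g. `ReplFull L` for `G3c^=`, `ReplMinus L` for `G3c^=⁻`,
`ReplMinus1 L` for `G3c₁^=⁻`). -/
inductive DerC (rp : Multiset (Fm L) → Multiset (Fm L) → Prop) :
    ℕ → Multiset (Fm L) → Multiset (Fm L) → Prop where
  | ax {n : ℕ} {Γ Δ : Multiset (Fm L)} {P : Fm L} (hP : P.IsAtomic) :
      DerC rp n (P ::ₘ Γ) (P ::ₘ Δ)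
  | botL {n : ℕ} {Γ Δ : Multiset (Fm L)} : DerC rp n (Fm.falsum ::ₘ Γ) Δ
  | andL {n : ℕ} {Γ Δ : Multiset (Fm L)} {A B : Fm L} :
      DerC rp n (A ::ₘ B ::ₘ Γ) Δ → DerC rp (n + 1) (Fm.and A B ::ₘ Γ) Δ
  | andR {n : ℕ} {Γ Δ : Multiset (Fm L)} {A B : Fm L} :
      DerC rp n Γ (A ::ₘ Δ) → DerC rp n Γ (B ::ₘ Δ) → DerC rp (n + 1) Γ (Fm.and A B ::ₘ Δ)
  | orL {n : ℕ} {Γ Δ : Multiset (Fm L)} {A B : Fm L} :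
      DerC rp n (A ::ₘ Γ) Δ → DerC rp n (B ::ₘ Γ) Δ → DerC rp (n + 1) (Fm.or A B ::ₘ Γ) Δ
  | orR {n : ℕ} {Γ Δ : Multiset (Fm L)} {A B : Fm L} :
      DerC rp n Γ (A ::ₘ B ::ₘ Δ) → DerC rp (n + 1) Γ (Fm.or A B ::ₘ Δ)
  | impL {n : ℕ} {Γ Δ : Multiset (Fm L)} {A B : Fm L} :
      DerC rp n Γ (A ::ₘ Δ) → DerC rp n (B ::ₘ Γ) Δ → DerC rp (n + 1) (Fm.imp A B ::ₘ Γ) Δ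
  | impR {n : ℕ} {Γ Δ : Multiset (Fm L)} {A B : Fm L} :
      DerC rp n (A ::ₘ Γ) (B ::ₘ Δ) → DerC rp (n + 1) Γ (Fm.imp A B ::ₘ Δ)
  | allL {n : ℕ} {Γ Δ : Multiset (Fm L)} {x : ℕ} {t : L.Term ℕ} {A : Fm L}
      (hf : Fm.freeFor t x A) :
      DerC rp n (A.subst x t ::ₘ Fm.all x A ::ₘ Γ) Δ → DerC rp (n + 1) (Fm.all x A ::ₘ Γ) Δ
  | allR {n : ℕ} {Γ Δ : Multiset (Fm L)} {x y : ℕ} {A : Fm L}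
      (hf : Fm.freeFor (Term.var y) x A) (hy : y ∉ (Fm.all x A).freeVars)
      (hΓ : ∀ C ∈ Γ, y ∉ Fm.freeVars C) (hΔ : ∀ C ∈ Δ, y ∉ Fm.freeVars C) :
      DerC rp n Γ (A.subst x (Term.var y) ::ₘ Δ) → DerC rp (n + 1) Γ (Fm.all x A ::ₘ Δ)
  | exL {n : ℕ} {Γ Δ : Multiset (Fm L)} {x y : ℕ} {A : Fm L}
      (hf : Fm.freeFor (Term.var y) x A) (hy : y ∉ (Fm.ex x A).freeVars)
      (hΓ : ∀ C ∈ Γ, y ∉ Fm.freeVars C) (hΔ : ∀ C ∈ Δ, y ∉ Fm.freeVars C) :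
      DerC rp n (A.subst x (Term.var y) ::ₘ Γ) Δ → DerC rp (n + 1) (Fm.ex x A ::ₘ Γ) Δ
  | exR {n : ℕ} {Γ Δ : Multiset (Fm L)} {x : ℕ} {t : L.Term ℕ} {A : Fm L}
      (hf : Fm.freeFor t x A) :
      DerC rp n Γ (A.subst x t ::ₘ Fm.ex x A ::ₘ Δ) → DerC rp (n + 1) Γ (Fm.ex x A ::ₘ Δ)
  | ref {n : ℕ} {Γ Δ : Multiset (Fm L)} (t : L.Term ℕ) :
      DerC rp n (Fm.equal t t ::ₘ Γ) Δ → DerC rp (n + 1) Γ Δ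
  | repl {n : ℕ} {Γp Γc Δ : Multiset (Fm L)} (h : rp Γp Γc) :
      DerC rp n Γp Δ → DerC rp (n + 1) Γc Δ

/-- `DerI rp n Γ Δ`: the sequent `Γ ⇒ Δ` has a derivation of height at most `n` in the
intuitionistic multisuccedent G3 calculus (the right rules for `→` and `∀` have
single-succedent premisses, and L→ repeats its principal formula) with the equality rule
Ref and the replacement rule given by `rp`. -/
inductive DerI (rp : Multiset (Fm L) → Multiset (Fm L) → Prop) :
    ℕ → Multiset (Fm L) → Multiset (Fm L) → Prop where
  | ax {n : ℕ} {Γ Δ : Multiset (Fm L)} {P : Fm L} (hP : P.IsAtomic) :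
      DerI rp n (P ::ₘ Γ) (P ::ₘ Δ)
  | botL {n : ℕ} {Γ Δ : Multiset (Fm L)} : DerI rp n (Fm.falsum ::ₘ Γ) Δ
  | andL {n : ℕ} {Γ Δ : Multiset (Fm L)} {A B : Fm L} :
      DerI rp n (A ::ₘ B ::ₘ Γ) Δ → DerI rp (n + 1) (Fm.and A B ::ₘ Γ) Δ
  | andR {n : ℕ} {Γ Δ : Multiset (Fm L)} {A B : Fm L} :
      DerI rp n Γ (A ::ₘ Δ) → DerI rp n Γ (B ::ₘ Δ) → DerI rp (n + 1) Γ (Fm.and A B ::ₘ Δ)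
  | orL {n : ℕ} {Γ Δ : Multiset (Fm L)} {A B : Fm L} :
      DerI rp n (A ::ₘ Γ) Δ → DerI rp n (B ::ₘ Γ) Δ → DerI rp (n + 1) (Fm.or A B ::ₘ Γ) Δ
  | orR {n : ℕ} {Γ Δ : Multiset (Fm L)} {A B : Fm L} :
      DerI rp n Γ (A ::ₘ B ::ₘ Δ) → DerI rp (n + 1) Γ (Fm.or A B ::ₘ Δ)
  | impL {n : ℕ} {Γ Δ : Multiset (Fm L)} {A B : Fm L} :
      DerI rp n (Fm.imp A B ::ₘ Γ) (A ::ₘ Δ) → DerI rp n (B ::ₘ Γ) Δ →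
      DerI rp (n + 1) (Fm.imp A B ::ₘ Γ) Δ
  | impR {n : ℕ} {Γ Δ : Multiset (Fm L)} {A B : Fm L} :
      DerI rp n (A ::ₘ Γ) {B} → DerI rp (n + 1) Γ (Fm.imp A B ::ₘ Δ)
  | allL {n : ℕ} {Γ Δ : Multiset (Fm L)} {x : ℕ} {t : L.Term ℕ} {A : Fm L}
      (hf : Fm.freeFor t x A) :
      DerI rp n (A.subst x t ::ₘ Fm.all x A ::ₘ Γ) Δ → DerI rp (n + 1) (Fm.all x A ::ₘ Γ) Δ
  | allR {n : ℕ} {Γ Δ : Multiset (Fm L)} {x y : ℕ} {A : Fm L}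
      (hf : Fm.freeFor (Term.var y) x A) (hy : y ∉ (Fm.all x A).freeVars)
      (hΓ : ∀ C ∈ Γ, y ∉ Fm.freeVars C) :
      DerI rp n Γ {A.subst x (Term.var y)} → DerI rp (n + 1) Γ (Fm.all x A ::ₘ Δ)
  | exL {n : ℕ} {Γ Δ : Multiset (Fm L)} {x y : ℕ} {A : Fm L}
      (hf : Fm.freeFor (Term.var y) x A) (hy : y ∉ (Fm.ex x A).freeVars)
      (hΓ : ∀ C ∈ Γ, y ∉ Fm.freeVars C) (hΔ : ∀ C ∈ Δ, y ∉ Fm.freeVars C) :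
      DerI rp n (A.subst x (Term.var y) ::ₘ Γ) Δ → DerI rp (n + 1) (Fm.ex x A ::ₘ Γ) Δ
  | exR {n : ℕ} {Γ Δ : Multiset (Fm L)} {x : ℕ} {t : L.Term ℕ} {A : Fm L}
      (hf : Fm.freeFor t x A) :
      DerI rp n Γ (A.subst x t ::ₘ Fm.ex x A ::ₘ Δ) → DerI rp (n + 1) Γ (Fm.ex x A ::ₘ Δ)
  | ref {n : ℕ} {Γ Δ : Multiset (Fm L)} (t : L.Term ℕ) :
      DerI rp n (Fm.equal t t ::ₘ Γ) Δ → DerI rp (n + 1) Γ Δ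
  | repl {n : ℕ} {Γp Γc Δ : Multiset (Fm L)} (h : rp Γp Γc) :
      DerI rp n Γp Δ → DerI rp (n + 1) Γc Δ

/-! Atoms are principal only in axioms, Ref and Repl⁻. Repl⁻ cannot produce the missing
`P[v/r]` at the root of the derivation, because it consumes `P[v/s]`; instead we transform
the whole derivation, replacing every antecedent `S` by an antecedent `T` that has the same
compound formulas and whose atoms generate those of `S` under Ref and Repl⁻ read forwards.
Only at an axiom is the principal atom actually produced, by a chain of Ref and Repl⁻ steps
read upwards. Such chains may reuse an equation because equations can be duplicated
(`s = r ⇐ s = r, s = s ⇐ s = r, s = r`), and eigenvariable conditions survive because the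
atoms of `T` have no free variables beyond those of the atoms of `S`. -/

theorem tCount_eq_zero_iff {w : ℕ} {t : L.Term ℕ} : tCount w t = 0 ↔ w ∉ t.varFinset := by
  induction t with
  | var u => simp [tCount, Term.varFinset, eq_comm]
  | func f ts ih => simp [tCount, Term.varFinset, Finset.sum_eq_zero_iff, ih]

theorem exists_tCount_eq_zero (a b : L.Term ℕ) : ∃ w, tCount w a = 0 ∧ tCount w b = 0 := by
  obtain ⟨w, hw⟩ := Infinite.exists_notMem_finset (a.varFinset ∪ b.varFinset)
  rw [Finset.mem_union, not_or] at hw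
  exact ⟨w, tCount_eq_zero_iff.2 hw.1, tCount_eq_zero_iff.2 hw.2⟩

namespace FirstOrder.Language.Term

theorem subst_update_eq_self {v : ℕ} {u t : L.Term ℕ} (h : tCount v t = 0) :
    t.subst (Function.update var v u) = t := by
  induction t with
  | var w =>
    have hw : w ≠ v := by rintro rfl; simp [tCount] at h
    simp [Term.subst, hw]
  | func f ts ih =>
    simp only [tCount, Finset.sum_eq_zero_iff, Finset.mem_univ, true_implies] at h
    simp [Term.subst, fun i => ih i (h i)]

theorem varFinset_subst_update_subset (v : ℕ) (s r t : L.Term ℕ) :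
    (t.subst (Function.update var v s)).varFinset ⊆
      (t.subst (Function.update var v r)).varFinset ∪ s.varFinset := by
  induction t with
  | var u =>
    by_cases hu : u = v
    · subst hu; simp [Term.subst]
    · simp [Term.subst, hu]
  | func f ts ih =>
    intro w hw
    simp only [Term.subst, Term.varFinset, Finset.mem_union, Finset.mem_biUnion,
      Finset.mem_univ, true_and] at hw ⊢
    obtain ⟨i, hi⟩ := hw
    rcases Finset.mem_union.1 (ih i hi) with h | h
    · exact .inl ⟨i, h⟩
    · exact .inr h

end FirstOrder.Language.Term

namespace Fm

theorem IsAtomic.subst {P : Fm L} (hP : P.IsAtomic) (v : ℕ) (t : L.Term ℕ) :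
    (P.subst v t).IsAtomic := by
  cases hP <;> constructor

instance : DecidablePred (IsAtomic (L := L)) := fun A => by
  cases A <;> first | exact isTrue (by constructor) | exact isFalse nofun

theorem IsAtomic.freeVars_subst_subset {Q : Fm L} (hQ : Q.IsAtomic) (v : ℕ) (s r : L.Term ℕ) :
    (Q.subst v s).freeVars ⊆ (Q.subst v r).freeVars ∪ (Fm.equal s r).freeVars := by
  have key := fun t => Term.varFinset_subst_update_subset v s r t
  intro w
  cases hQ with
  | equal a b =>
    simp only [Fm.subst, ssub, freeVars, Set.mem_union, Set.mem_ofPred_eq, ne_eq,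
      tCount_eq_zero_iff, not_not]
    intro h
    rcases h with h | h <;> rcases Finset.mem_union.1 (key _ h) with h' | h' <;> tauto
  | rel R ts =>
    simp only [Fm.subst, ssub, freeVars, Set.mem_union, Set.mem_ofPred_eq, ne_eq,
      tCount_eq_zero_iff, not_not]
    rintro ⟨i, h⟩
    rcases Finset.mem_union.1 (key _ h) with h' | h'
    · exact .inl ⟨i, h'⟩
    · exact .inr (.inl h')

theorem exists_eq_equal_of_subst_eq_equal {Q : Fm L} {v : ℕ} {t a b : L.Term ℕ}
    (h : Q.subst v t = equal a b) : ∃ a' b', Q = equal a' b' := by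
  cases Q <;> first | exact ⟨_, _, rfl⟩ | simp [Fm.subst, ssub] at h

end Fm

section HeightMonotonicity

variable {rp : Multiset (Fm L) → Multiset (Fm L) → Prop}

theorem DerI.succ {n : ℕ} {Γ Δ : Multiset (Fm L)} (h : DerI rp n Γ Δ) :
    DerI rp (n + 1) Γ Δ := by
  induction h with
  | ax hP => exact .ax hP
  | botL => exact .botL
  | andL _ ih => exact .andL ih
  | andR _ _ ih₁ ih₂ => exact .andR ih₁ ih₂
  | orL _ _ ih₁ ih₂ => exact .orL ih₁ ih₂
  | orR _ ih => exact .orR ih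
  | impL _ _ ih₁ ih₂ => exact .impL ih₁ ih₂
  | impR _ ih => exact .impR ih
  | allL hf _ ih => exact .allL hf ih
  | allR hf hy hΓ _ ih => exact .allR hf hy hΓ ih
  | exL hf hy hΓ hΔ _ ih => exact .exL hf hy hΓ hΔ ih
  | exR hf _ ih => exact .exR hf ih
  | ref t _ ih => exact .ref t ih
  | repl h _ ih => exact .repl h ih

theorem DerI.mono {n m : ℕ} {Γ Δ : Multiset (Fm L)} (h : DerI rp n Γ Δ) (hnm : n ≤ m) :
    DerI rp m Γ Δ := by
  induction hnm with
  | refl => exact h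
  | step _ ih => exact ih.succ

end HeightMonotonicity

def Derivable (Γ Δ : Multiset (Fm L)) : Prop := ∃ n, DerI (ReplMinus L) n Γ Δ

theorem Derivable.exists_common_height {Γ₁ Δ₁ Γ₂ Δ₂ : Multiset (Fm L)}
    (h₁ : Derivable Γ₁ Δ₁) (h₂ : Derivable Γ₂ Δ₂) :
    ∃ n, DerI (ReplMinus L) n Γ₁ Δ₁ ∧ DerI (ReplMinus L) n Γ₂ Δ₂ :=
  let ⟨n₁, d₁⟩ := h₁
  let ⟨n₂, d₂⟩ := h₂
  ⟨max n₁ n₂, d₁.mono (le_max_left _ _), d₂.mono (le_max_right _ _)⟩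

theorem ReplMinus.cons {Γp Γc : Multiset (Fm L)} (A : Fm L) (h : ReplMinus L Γp Γc) :
    ReplMinus L (A ::ₘ Γp) (A ::ₘ Γc) := by
  obtain ⟨s, r, v, P, Γ, hP, hs, hr, rfl, rfl⟩ := h
  exact ⟨s, r, v, P, A ::ₘ Γ, hP, hs, hr, by rw [cons_swap A, cons_swap A],
    by rw [cons_swap A, cons_swap A]⟩

/-- `UpStep M M'`: `M ⇒ Δ` follows from `M' ⇒ Δ` by one application of Ref or Repl⁻. -/
inductive UpStep : Multiset (Fm L) → Multiset (Fm L) → Prop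
  | ref (t : L.Term ℕ) (M : Multiset (Fm L)) : UpStep M (Fm.equal t t ::ₘ M)
  | replMinus {Γp Γc : Multiset (Fm L)} : ReplMinus L Γp Γc → UpStep Γc Γp

abbrev UpChain : Multiset (Fm L) → Multiset (Fm L) → Prop := Relation.ReflTransGen UpStep

theorem UpStep.derivable {M M' Δ : Multiset (Fm L)} (h : UpStep M M') (hd : Derivable M' Δ) :
    Derivable M Δ := by
  obtain ⟨n, d⟩ := hd
  cases h with
  | ref t => exact ⟨n + 1, .ref t d⟩
  | replMinus h => exact ⟨n + 1, .repl h d⟩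

theorem UpChain.derivable {M M' Δ : Multiset (Fm L)} (h : UpChain M M') (hd : Derivable M' Δ) :
    Derivable M Δ := by
  induction h with
  | refl => exact hd
  | tail _ hstep ih => exact ih (hstep.derivable hd)

theorem UpStep.cons {M M' : Multiset (Fm L)} (A : Fm L) (h : UpStep M M') :
    UpStep (A ::ₘ M) (A ::ₘ M') := by
  cases h with
  | ref t M => rw [cons_swap A]; exact .ref t _
  | replMinus h => exact .replMinus (h.cons A)

theorem UpChain.cons {M M' : Multiset (Fm L)} (A : Fm L) (h : UpChain M M') :
    UpChain (A ::ₘ M) (A ::ₘ M') :=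
  Relation.ReflTransGen.lift (A ::ₘ ·) (fun _ _ => UpStep.cons A) _ _ h

theorem UpChain.dup_equal (a b : L.Term ℕ) (M : Multiset (Fm L)) :
    UpChain (Fm.equal a b ::ₘ M) (Fm.equal a b ::ₘ Fm.equal a b ::ₘ M) := by
  obtain ⟨w, ha, hb⟩ := exists_tCount_eq_zero a b
  have hsubst (t : L.Term ℕ) : (Fm.equal a (Term.var w)).subst w t = Fm.equal a t := by
    simp [Fm.subst, Fm.ssub, Term.subst, Term.subst_update_eq_self ha]
  refine .tail (.single (.ref a _)) ?_
  rw [cons_swap (Fm.equal a a)]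
  simpa only [hsubst] using
    UpStep.replMinus ⟨a, b, w, Fm.equal a (Term.var w), M, .equal _ _, ha, hb, rfl, rfl⟩

theorem UpChain.replMinus {s r : L.Term ℕ} {v : ℕ} {Q : Fm L} {M M₁ M₂ : Multiset (Fm L)}
    (hQ : Q.IsAtomic) (hs : tCount v s = 0) (hr : tCount v r = 0)
    (h₁ : UpChain M (Fm.equal s r ::ₘ M₁)) (h₂ : UpChain M₁ (Q.subst v s ::ₘ M₂)) :
    UpChain M (Q.subst v r ::ₘ Fm.equal s r ::ₘ M₂) := by
  refine (h₁.trans (h₂.cons _)).tail ?_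
  rw [cons_swap (Q.subst v r)]
  exact .replMinus ⟨s, r, v, Q, M₂, hQ, hs, hr, rfl, rfl⟩

def atoms (S : Multiset (Fm L)) : Multiset (Fm L) := S.filter Fm.IsAtomic

def compounds (S : Multiset (Fm L)) : Multiset (Fm L) := S.filter (¬ ·.IsAtomic)

theorem compounds_cons_of_isAtomic {A : Fm L} (hA : A.IsAtomic) (S : Multiset (Fm L)) :
    compounds (A ::ₘ S) = compounds S :=
  filter_cons_of_neg _ (not_not.2 hA)

theorem compounds_cons_of_not_isAtomic {A : Fm L} (hA : ¬ A.IsAtomic) (S : Multiset (Fm L)) :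
    compounds (A ::ₘ S) = A ::ₘ compounds S :=
  filter_cons_of_pos _ hA

def atomVars (S : Multiset (Fm L)) : Set ℕ := {w | ∃ B ∈ S, B.IsAtomic ∧ w ∈ B.freeVars}

theorem atomVars_cons (A : Fm L) (S : Multiset (Fm L)) :
    atomVars (A ::ₘ S) = {w | A.IsAtomic ∧ w ∈ A.freeVars} ∪ atomVars S := by
  ext w
  simp [atomVars]

inductive Available (E : Multiset (Fm L)) : Fm L → Prop
  | refl (t : L.Term ℕ) : Available E (Fm.equal t t)
  | mem {X : Fm L} : X ∈ E → Available E X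
  | replMinus {s r : L.Term ℕ} {v : ℕ} {Q : Fm L} (hQ : Q.IsAtomic) (hs : tCount v s = 0)
      (hr : tCount v r = 0) :
      Available E (Fm.equal s r) → Available E (Q.subst v s) → Available E (Q.subst v r)

namespace Available

variable {E : Multiset (Fm L)}

theorem atom {S : Multiset (Fm L)} {X : Fm L} (hX : X ∈ S) (hXa : X.IsAtomic) :
    Available (atoms S) X :=
  .mem (mem_filter.2 ⟨hX, hXa⟩)

theorem mono {E' : Multiset (Fm L)} {X : Fm L} (h : Available E X) (hE : E ⊆ E') :
    Available E' X := by
  induction h with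
  | refl t => exact .refl t
  | mem hX => exact .mem (hE hX)
  | replMinus hQ hs hr _ _ ihe ihb => exact .replMinus hQ hs hr ihe ihb

theorem exists_upChain_of_eq_equal {X : Fm L} (h : Available E X) (hX : ∃ a b, X = Fm.equal a b)
    {M : Multiset (Fm L)} (hE : E ⊆ M) : ∃ M', M ≤ M' ∧ UpChain M (X ::ₘ M') := by
  induction h generalizing M with
  | refl t => exact ⟨M, le_rfl, .single (.ref t M)⟩
  | mem hmem =>
    obtain ⟨a, b, rfl⟩ := hX
    obtain ⟨M₀, rfl⟩ := exists_cons_of_mem (hE hmem)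
    exact ⟨_, le_rfl, .dup_equal a b M₀⟩
  | @replMinus s r v Q hQ hs hr _ _ ihe ihb =>
    obtain ⟨a, b, hab⟩ := hX
    obtain ⟨a', b', rfl⟩ := Fm.exists_eq_equal_of_subst_eq_equal hab
    obtain ⟨M₁, hM₁, h₁⟩ := ihe ⟨s, r, rfl⟩ hE
    obtain ⟨M₂, hM₂, h₂⟩ := ihb ⟨_, _, rfl⟩ (Subset.trans hE (subset_of_le hM₁))
    exact ⟨_, hM₁.trans (hM₂.trans (le_cons_self _ _)), h₁.replMinus hQ hs hr h₂⟩

theorem exists_upChain {X : Fm L} (h : Available E X) {M : Multiset (Fm L)} (hE : E ⊆ M) :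
    ∃ M', UpChain M (X ::ₘ M') := by
  induction h generalizing M with
  | refl t => exact ⟨M, .single (.ref t M)⟩
  | mem hmem =>
    obtain ⟨M₀, rfl⟩ := exists_cons_of_mem (hE hmem)
    exact ⟨M₀, .refl⟩
  | @replMinus s r v Q hQ hs hr he _ _ ihb =>
    obtain ⟨M₁, hM₁, h₁⟩ := he.exists_upChain_of_eq_equal ⟨s, r, rfl⟩ hE
    obtain ⟨M₂, h₂⟩ := ihb (Subset.trans hE (subset_of_le hM₁))
    exact ⟨_, h₁.replMinus hQ hs hr h₂⟩

end Available

structure Covers (T S : Multiset (Fm L)) : Prop where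
  compounds_eq : compounds T = compounds S
  available : ∀ X ∈ S, X.IsAtomic → Available (atoms T) X
  atomVars_subset : atomVars T ⊆ atomVars S

namespace Covers

variable {T S : Multiset (Fm L)}

theorem refl (S : Multiset (Fm L)) : Covers S S :=
  ⟨rfl, fun _ => .atom, subset_rfl⟩

theorem cons (A : Fm L) (hc : Covers T S) : Covers (A ::ₘ T) (A ::ₘ S) where
  compounds_eq := by
    by_cases hA : A.IsAtomic
    · rw [compounds_cons_of_isAtomic hA, compounds_cons_of_isAtomic hA, hc.compounds_eq]
    · rw [compounds_cons_of_not_isAtomic hA, compounds_cons_of_not_isAtomic hA, hc.compounds_eq]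
  available X hX hXa := by
    rcases mem_cons.1 hX with rfl | hX
    · exact .atom (mem_cons_self _ _) hXa
    · exact (hc.available X hX hXa).mono (subset_of_le (filter_le_filter _ (le_cons_self _ _)))
  atomVars_subset := by
    rw [atomVars_cons, atomVars_cons]
    exact Set.union_subset_union_right _ hc.atomVars_subset

theorem cons_of_available {X : Fm L} (hc : Covers T S) (hX : X.IsAtomic)
    (hav : Available (atoms T) X) : Covers T (X ::ₘ S) where
  compounds_eq := by rw [compounds_cons_of_isAtomic hX, hc.compounds_eq]
  available Y hY hYa := by
    rcases mem_cons.1 hY with rfl | hY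
    · exact hav
    · exact hc.available Y hY hYa
  atomVars_subset := by
    rw [atomVars_cons]
    exact hc.atomVars_subset.trans Set.subset_union_right

theorem exists_eq_cons {A : Fm L} (hc : Covers T (A ::ₘ S)) (hA : ¬ A.IsAtomic) :
    ∃ T', T = A ::ₘ T' ∧ Covers T' S := by
  have hAT : A ∈ T := by
    have : A ∈ compounds T := by
      rw [hc.compounds_eq, compounds_cons_of_not_isAtomic hA]
      exact mem_cons_self _ _
    exact mem_of_mem_filter this
  obtain ⟨T', rfl⟩ := exists_cons_of_mem hAT
  have hatoms : atoms (A ::ₘ T') = atoms T' := filter_cons_of_neg _ hA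
  refine ⟨T', rfl, ⟨?_, ?_, ?_⟩⟩
  · have := hc.compounds_eq
    rwa [compounds_cons_of_not_isAtomic hA, compounds_cons_of_not_isAtomic hA,
      cons_inj_right] at this
  · intro X hX hXa
    rw [← hatoms]
    exact hc.available X (mem_cons_of_mem hX) hXa
  · simpa [atomVars_cons, hA] using hc.atomVars_subset

theorem replMinus {s r : L.Term ℕ} {v : ℕ} {Q : Fm L} {Θ : Multiset (Fm L)} (hQ : Q.IsAtomic)
    (hs : tCount v s = 0) (hr : tCount v r = 0)
    (hc : Covers T (Fm.equal s r ::ₘ Q.subst v s ::ₘ Θ)) :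
    Covers T (Fm.equal s r ::ₘ Q.subst v r ::ₘ Θ) where
  compounds_eq := by
    rw [compounds_cons_of_isAtomic (.equal s r), compounds_cons_of_isAtomic (hQ.subst v r)]
    simpa only [compounds_cons_of_isAtomic (.equal s r),
      compounds_cons_of_isAtomic (hQ.subst v s)] using hc.compounds_eq
  available X hX hXa := by
    have hsr := hc.available _ (mem_cons_self _ _) (.equal s r)
    rcases mem_cons.1 hX with rfl | hX
    · exact hsr
    rcases mem_cons.1 hX with rfl | hX
    · exact .replMinus hQ hs hr hsr
        (hc.available _ (mem_cons_of_mem (mem_cons_self _ _)) (hQ.subst v s))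
    · exact hc.available X (mem_cons_of_mem (mem_cons_of_mem hX)) hXa
  atomVars_subset := by
    refine hc.atomVars_subset.trans ?_
    have key := hQ.freeVars_subst_subset v s r
    simp only [atomVars_cons, hQ.subst, Fm.IsAtomic.equal, true_and, Set.ofPred_mem_eq]
    intro w hw
    have := @key w
    simp only [Set.mem_union] at hw this ⊢
    tauto

theorem notMem_freeVars {y : ℕ} (hc : Covers T S) (hS : ∀ C ∈ S, y ∉ C.freeVars) :
    ∀ C ∈ T, y ∉ C.freeVars := by
  intro C hC hy
  by_cases hCa : C.IsAtomic
  · obtain ⟨B, hB, -, hyB⟩ := hc.atomVars_subset ⟨C, hC, hCa, hy⟩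
    exact hS B hB hyB
  · have : C ∈ compounds S := hc.compounds_eq ▸ mem_filter.2 ⟨hC, hCa⟩
    exact hS C (mem_of_mem_filter this) hy

end Covers

theorem Covers.derivable {n : ℕ} {S T Δ : Multiset (Fm L)} (h : DerI (ReplMinus L) n S Δ)
    (hc : Covers T S) : Derivable T Δ := by
  induction h generalizing T with
  | ax hP =>
    obtain ⟨M, hM⟩ := (hc.available _ (mem_cons_self _ _) hP).exists_upChain (filter_subset _ T)
    exact hM.derivable ⟨0, .ax hP⟩
  | botL =>
    obtain ⟨T', rfl, -⟩ := hc.exists_eq_cons nofun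
    exact ⟨0, .botL⟩
  | @andL _ _ _ A B _ ih =>
    obtain ⟨T', rfl, hc'⟩ := hc.exists_eq_cons nofun
    obtain ⟨k, d⟩ := ih ((hc'.cons B).cons A)
    exact ⟨k + 1, .andL d⟩
  | andR _ _ ih₁ ih₂ =>
    obtain ⟨k, d₁, d₂⟩ := (ih₁ hc).exists_common_height (ih₂ hc)
    exact ⟨k + 1, .andR d₁ d₂⟩
  | @orL _ _ _ A B _ _ ih₁ ih₂ =>
    obtain ⟨T', rfl, hc'⟩ := hc.exists_eq_cons nofun
    obtain ⟨k, d₁, d₂⟩ := (ih₁ (hc'.cons A)).exists_common_height (ih₂ (hc'.cons B))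
    exact ⟨k + 1, .orL d₁ d₂⟩
  | orR _ ih =>
    obtain ⟨k, d⟩ := ih hc
    exact ⟨k + 1, .orR d⟩
  | @impL _ _ _ A B _ _ ih₁ ih₂ =>
    obtain ⟨T', rfl, hc'⟩ := hc.exists_eq_cons nofun
    obtain ⟨k, d₁, d₂⟩ := (ih₁ hc).exists_common_height (ih₂ (hc'.cons B))
    exact ⟨k + 1, .impL d₁ d₂⟩
  | @impR _ _ _ A B _ ih =>
    obtain ⟨k, d⟩ := ih (hc.cons A)
    exact ⟨k + 1, .impR d⟩
  | @allL _ _ _ x t A hf _ ih =>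
    obtain ⟨k, d⟩ := ih (hc.cons (A.subst x t))
    obtain ⟨T', rfl, -⟩ := hc.exists_eq_cons nofun
    exact ⟨k + 1, .allL hf d⟩
  | allR hf hy hΓ _ ih =>
    obtain ⟨k, d⟩ := ih hc
    exact ⟨k + 1, .allR hf hy (hc.notMem_freeVars hΓ) d⟩
  | @exL _ _ _ x y A hf hy hΓ hΔ _ ih =>
    obtain ⟨T', rfl, hc'⟩ := hc.exists_eq_cons nofun
    obtain ⟨k, d⟩ := ih (hc'.cons (A.subst x (Term.var y)))
    exact ⟨k + 1, .exL hf hy (hc'.notMem_freeVars hΓ) hΔ d⟩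
  | exR hf _ ih =>
    obtain ⟨k, d⟩ := ih hc
    exact ⟨k + 1, .exR hf d⟩
  | ref t _ ih => exact ih (hc.cons_of_available (.equal t t) (.refl t))
  | repl hrp _ ih =>
    obtain ⟨s, r, v, Q, Θ, hQ, hs, hr, rfl, rfl⟩ := hrp
    exact ih (hc.replMinus hQ hs hr)

/-- The rule Repl is admissible in the intuitionistic calculus `G3i^=⁻`: for atomic `P`
and `v` not occurring in `s`, `r`, if `s = r, P[v/s], P[v/r], Γ ⇒ Δ` is derivable then
so is `s = r, P[v/s], Γ ⇒ Δ`. -/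
theorem repl_admissible_G3iEqMinus (L : FirstOrder.Language.{u, v})
    (P : Fm L) (hP : P.IsAtomic) (v : ℕ)
    (s r : L.Term ℕ) (hs : tCount v s = 0) (hr : tCount v r = 0)
    (Γ Δ : Multiset (Fm L))
    (hd : ∃ n, DerI (ReplMinus L) n
      (Fm.equal s r ::ₘ P.subst v s ::ₘ P.subst v r ::ₘ Γ) Δ) :
    ∃ n, DerI (ReplMinus L) n (Fm.equal s r ::ₘ P.subst v s ::ₘ Γ) Δ := by
  obtain ⟨n, hd⟩ := hd
  rw [cons_swap (P.subst v s), cons_swap (Fm.equal s r)] at hd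
  set T := Fm.equal s r ::ₘ P.subst v s ::ₘ Γ
  have hPr : Available (atoms T) (P.subst v r) :=
    .replMinus hP hs hr (.atom (mem_cons_self _ _) (.equal s r))
      (.atom (mem_cons_of_mem (mem_cons_self _ _)) (hP.subst v s))
  exact ((Covers.refl T).cons_of_available (hP.subst v r) hPr).derivable hd
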